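/- arXiv:1209.1225 — 3 statements merged into one kernel-verified Lean document; each statement's English description precedes it below -/
import Mathlib

section
/- Let ρ: ℝ → [0,∞) be in L²(ℝ), φ: ℝ → ℝ Borel measurable, and a ∈ ℝ with ρ(x) = ρ(a − x) for almost all x. Define f₁(x) = ρ(x)·e^{iφ(x)} and f₂(x) = ρ(x)·e^{−iφ(a−x)}. Then |f₁| = |f₂| almost everywhere and |f̂₁| = |f̂₂| almost everywhere, where f̂ denotes the Fourier transform f̂(x) = ∫ e^{−ixy} f(y) dy. -/
open MeasureTheory Real Complex

/-- Fourier transform with convention `f̂(x) = ∫ e^{-ixy} f(y) dy`. -/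
noncomputable def ft (f : ℝ → ℂ) (x : ℝ) : ℂ :=
  ∫ y : ℝ, Complex.exp (-(Complex.I * x * y)) * f y

theorem stmt0 (ρ : ℝ → ℝ) (φ : ℝ → ℝ) (a : ℝ)
    (hρpos : ∀ x, 0 ≤ ρ x)
    (hρL2 : MemLp (fun x => (ρ x : ℂ)) 2 (volume : Measure ℝ))
    (hφmeas : Measurable φ)
    (hsym : ∀ᵐ x : ℝ, ρ x = ρ (a - x))
    (f₁ f₂ : ℝ → ℂ)
    (hf₁ : ∀ x, f₁ x = (ρ x : ℂ) * Complex.exp (Complex.I * φ x))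
    (hf₂ : ∀ x, f₂ x = (ρ x : ℂ) * Complex.exp (-(Complex.I * φ (a - x)))) :
    (∀ᵐ x : ℝ, ‖f₁ x‖ = ‖f₂ x‖) ∧ (∀ᵐ x : ℝ, ‖ft f₁ x‖ = ‖ft f₂ x‖) := by
  have hnorm1 : ∀ x, ‖f₁ x‖ = ρ x := by
    intro x
    simp [hf₁ x, Complex.norm_exp, _root_.abs_of_nonneg (hρpos x)]
  have hnorm2 : ∀ x, ‖f₂ x‖ = ρ x := by
    intro x
    simp [hf₂ x, Complex.norm_exp, _root_.abs_of_nonneg (hρpos x)]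
  constructor
  · filter_upwards with x
    rw [hnorm1, hnorm2]
  · -- key: f₂ =ᵐ conj (f₁ (a - ·))
    have hkey : ∀ᵐ y : ℝ, f₂ y = (starRingEnd ℂ) (f₁ (a - y)) := by
      filter_upwards [hsym] with y hy
      rw [hf₂ y, hf₁ (a - y)]
      rw [map_mul, ← Complex.exp_conj]
      simp [hy]
    filter_upwards with x
    have h1 : ft f₂ x = ∫ y : ℝ, Complex.exp (-(Complex.I * x * y)) *
        (starRingEnd ℂ) (f₁ (a - y)) := by
      apply integral_congr_ae
      filter_upwards [hkey] with y hy
      rw [hy]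
    have h2 : (fun y : ℝ => Complex.exp (-(Complex.I * x * y)) *
        (starRingEnd ℂ) (f₁ (a - y))) =
        fun y : ℝ => (starRingEnd ℂ) (Complex.exp (Complex.I * x * y) * f₁ (a - y)) := by
      funext y
      rw [map_mul, ← Complex.exp_conj]
      simp
    have h3 : ft f₂ x = (starRingEnd ℂ)
        (∫ y : ℝ, Complex.exp (Complex.I * x * y) * f₁ (a - y)) := by
      rw [h1, h2, integral_conj]
    have h4 : (∫ y : ℝ, Complex.exp (Complex.I * x * y) * f₁ (a - y)) =
        ∫ u : ℝ, Complex.exp (Complex.I * x * (a - u)) * f₁ u := by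
      have := MeasureTheory.integral_sub_left_eq_self
        (fun u : ℝ => Complex.exp (Complex.I * x * (a - u)) * f₁ u) volume a
      simpa using this
    have h5 : (∫ u : ℝ, Complex.exp (Complex.I * x * (a - u)) * f₁ u) =
        Complex.exp (Complex.I * x * a) * ft f₁ x := by
      rw [ft, ← integral_const_mul]
      congr 1
      funext u
      rw [← mul_assoc, ← Complex.exp_add]
      ring_nf
    rw [h3, h4, h5]
    simp [RCLike.norm_conj, Complex.norm_exp]
end

section
/- There exists a closed infinite-dimensional subspace L of L²(ℝ) such that every nonzero f ∈ L is a Pauli state, i.e., there exists g ∈ L²(ℝ) with |f| = |g| a.e., |f̂| = |ĝ| a.e., and f, g linearly independent. -/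
open MeasureTheory Real Complex

namespace Stmt11Aux

noncomputable section

abbrev H := Lp ℂ 2 (volume : Measure ℝ)

/-- The annulus `n < |x| ≤ n+1`. -/
def s (n : ℕ) : Set ℝ := Set.Ioc (n : ℝ) (n + 1) ∪ Set.Ico (-(n : ℝ) - 1) (-(n : ℝ))

lemma mem_s_iff {n : ℕ} {x : ℝ} : x ∈ s n ↔ (n : ℝ) < |x| ∧ |x| ≤ (n : ℝ) + 1 := by
  have hn : (0 : ℝ) ≤ (n : ℝ) := Nat.cast_nonneg n
  constructor
  · rintro (⟨h1, h2⟩ | ⟨h1, h2⟩)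
    · rw [_root_.abs_of_pos (lt_of_le_of_lt hn h1)]; exact ⟨h1, h2⟩
    · rw [_root_.abs_of_neg (by linarith)]; constructor <;> linarith
  · rintro ⟨h1, h2⟩
    rcases le_or_gt 0 x with hx | hx
    · rw [_root_.abs_of_nonneg hx] at h1 h2; exact Or.inl ⟨h1, h2⟩
    · rw [_root_.abs_of_neg hx] at h1 h2; exact Or.inr ⟨by linarith, by linarith⟩

lemma hs (n : ℕ) : MeasurableSet (s n) :=
  measurableSet_Ioc.union measurableSet_Ico

lemma neg_mem_s_iff {n : ℕ} {x : ℝ} : -x ∈ s n ↔ x ∈ s n := by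
  simp [mem_s_iff, abs_neg]

lemma volume_s (n : ℕ) : volume (s n) = 2 := by
  have hn : (0 : ℝ) ≤ (n : ℝ) := Nat.cast_nonneg n
  have hdisj : Disjoint (Set.Ioc (n : ℝ) (n + 1)) (Set.Ico (-(n : ℝ) - 1) (-(n : ℝ))) := by
    rw [Set.disjoint_left]
    rintro x ⟨h1, _⟩ ⟨_, h4⟩
    linarith
  rw [s, measure_union hdisj measurableSet_Ico, Real.volume_Ioc, Real.volume_Ico]
  have e1 : (n : ℝ) + 1 - n = 1 := by ring
  have e2 : -(n : ℝ) - (-(n : ℝ) - 1) = 1 := by ring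
  rw [e1, e2, ENNReal.ofReal_one, one_add_one_eq_two]

lemma volume_s_ne_top (n : ℕ) : volume (s n) ≠ ⊤ := by
  rw [volume_s]; exact (by norm_num : (2 : ENNReal) ≠ ⊤)

lemma s_inter_empty {k l : ℕ} (h : k ≠ l) : s k ∩ s l = ∅ := by
  ext x
  simp only [Set.mem_inter_iff, Set.mem_empty_iff_false, iff_false, not_and]
  intro h1 h2
  rw [mem_s_iff] at h1 h2
  have hkl : (k : ℝ) < (l : ℝ) + 1 := lt_of_lt_of_le h1.1 h2.2
  have hlk : (l : ℝ) < (k : ℝ) + 1 := lt_of_lt_of_le h2.1 h1.2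
  have : k < l + 1 := by exact_mod_cast hkl
  have : l < k + 1 := by exact_mod_cast hlk
  omega

/-- The normalized indicator functions. -/
def e (k : ℕ) : ℝ → ℂ := (s k).indicator (fun _ => (2⁻¹ : ℂ))

lemma conj_e (k : ℕ) (x : ℝ) : (starRingEnd ℂ) (e k x) = e k x := by
  by_cases h : x ∈ s k
  · simp [e, Set.indicator_of_mem h, map_inv₀, map_ofNat]
  · simp [e, Set.indicator_of_notMem h]

lemma e_neg (k : ℕ) (x : ℝ) : e k (-x) = e k x := by
  by_cases h : x ∈ s k
  · rw [e, Set.indicator_of_mem h, Set.indicator_of_mem (neg_mem_s_iff.2 h)]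
  · rw [e, Set.indicator_of_notMem h,
      Set.indicator_of_notMem (fun hc => h (neg_mem_s_iff.1 hc))]

lemma e_mul_e (k l : ℕ) (x : ℝ) :
    e k x * e l x = (s k ∩ s l).indicator (fun _ => (2⁻¹ * 2⁻¹ : ℂ)) x :=
  (Set.inter_indicator_mul _ _ x).symm

lemma integrable_e_mul_e (k l : ℕ) : Integrable (fun x => e k x * e l x) volume := by
  have : (fun x => e k x * e l x)
      = (s k ∩ s l).indicator (fun _ => (2⁻¹ * 2⁻¹ : ℂ)) := funext (e_mul_e k l)
  rw [this, integrable_indicator_iff ((hs k).inter (hs l))]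
  refine integrableOn_const (lt_top_iff_ne_top.1 ?_)
  exact lt_of_le_of_lt (measure_mono Set.inter_subset_left)
    (by rw [volume_s]; exact (by norm_num : (2 : ENNReal) < ⊤))

lemma integral_e_mul_e (k l : ℕ) :
    ∫ x : ℝ, e k x * e l x = if k = l then (2⁻¹ : ℂ) else 0 := by
  have hrw : (fun x : ℝ => e k x * e l x)
      = (s k ∩ s l).indicator (fun _ => (2⁻¹ * 2⁻¹ : ℂ)) := funext (e_mul_e k l)
  by_cases h : k = l
  · subst h
    rw [if_pos rfl]
    calc ∫ x : ℝ, e k x * e k x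
        = ∫ x : ℝ, (s k ∩ s k).indicator (fun _ => (2⁻¹ * 2⁻¹ : ℂ)) x := by rw [hrw]
      _ = (volume (s k)).toReal • (2⁻¹ * 2⁻¹ : ℂ) := by
          rw [Set.inter_self]; exact integral_indicator_const _ (hs k)
      _ = (2⁻¹ : ℂ) := by
          rw [volume_s]
          simp only [ENNReal.toReal_ofNat, Complex.real_smul, Complex.ofReal_ofNat]
          norm_num
  · rw [if_neg h]
    calc ∫ x : ℝ, e k x * e l x
        = ∫ x : ℝ, (s k ∩ s l).indicator (fun _ => (2⁻¹ * 2⁻¹ : ℂ)) x := by rw [hrw]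
      _ = 0 := by rw [s_inter_empty h]; simp

/-- Generic four-term integral evaluation. -/
lemma integral_comb (a b c d : ℂ) (k1 l1 k2 l2 k3 l3 k4 l4 : ℕ) :
    ∫ x : ℝ, (a * (e k1 x * e l1 x) + b * (e k2 x * e l2 x)
      + c * (e k3 x * e l3 x) + d * (e k4 x * e l4 x))
    = a * (if k1 = l1 then (2⁻¹ : ℂ) else 0) + b * (if k2 = l2 then (2⁻¹ : ℂ) else 0)
      + c * (if k3 = l3 then (2⁻¹ : ℂ) else 0) + d * (if k4 = l4 then (2⁻¹ : ℂ) else 0) := by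
  have i1 := (integrable_e_mul_e k1 l1).const_mul a
  have i2 := (integrable_e_mul_e k2 l2).const_mul b
  have i3 := (integrable_e_mul_e k3 l3).const_mul c
  have i4 := (integrable_e_mul_e k4 l4).const_mul d
  have i12 : Integrable (fun x => a * (e k1 x * e l1 x) + b * (e k2 x * e l2 x)) volume :=
    i1.add i2
  have i123 : Integrable (fun x => a * (e k1 x * e l1 x) + b * (e k2 x * e l2 x)
      + c * (e k3 x * e l3 x)) volume := i12.add i3
  rw [integral_add i123 i4, integral_add i12 i3, integral_add i1 i2]
  rw [integral_const_mul, integral_const_mul, integral_const_mul, integral_const_mul,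
    integral_e_mul_e, integral_e_mul_e, integral_e_mul_e, integral_e_mul_e]

/-- The plain-function representatives of our basis vectors. -/
def p (n : ℕ) : ℝ → ℂ := fun x => e (2 * n) x + Complex.I * e (2 * n + 1) x

lemma p_neg (n : ℕ) (x : ℝ) : p n (-x) = p n x := by
  simp [p, e_neg]

lemma conj_p (n : ℕ) (x : ℝ) :
    (starRingEnd ℂ) (p n x) = e (2 * n) x - Complex.I * e (2 * n + 1) x := by
  simp only [p, map_add, map_mul, Complex.conj_I, conj_e]
  ring

lemma integral_conj_p_mul_p (n m : ℕ) :
    (∫ x : ℝ, (starRingEnd ℂ) (p n x) * p m x) = if n = m then 1 else 0 := by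
  have hpt : (fun x : ℝ => (starRingEnd ℂ) (p n x) * p m x)
      = fun x : ℝ => (1 : ℂ) * (e (2 * n) x * e (2 * m) x)
          + Complex.I * (e (2 * n) x * e (2 * m + 1) x)
          + (-Complex.I) * (e (2 * n + 1) x * e (2 * m) x)
          + (1 : ℂ) * (e (2 * n + 1) x * e (2 * m + 1) x) := by
    funext x
    rw [conj_p]
    simp only [p]
    ring_nf
    simp only [Complex.I_sq]
    ring
  rw [hpt, integral_comb]
  by_cases h : n = m
  · subst h
    rw [if_pos rfl, if_pos rfl, if_pos rfl, if_neg (show 2 * n ≠ 2 * n + 1 by omega),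
      if_neg (show 2 * n + 1 ≠ 2 * n by omega)]
    norm_num
  · rw [if_neg h, if_neg (show 2 * n ≠ 2 * m by omega),
      if_neg (show 2 * n ≠ 2 * m + 1 by omega), if_neg (show 2 * n + 1 ≠ 2 * m by omega),
      if_neg (show 2 * n + 1 ≠ 2 * m + 1 by omega)]
    norm_num

lemma integral_p_mul_p (n m : ℕ) : (∫ x : ℝ, p n x * p m x) = 0 := by
  have hpt : (fun x : ℝ => p n x * p m x)
      = fun x : ℝ => (1 : ℂ) * (e (2 * n) x * e (2 * m) x)
          + Complex.I * (e (2 * n) x * e (2 * m + 1) x)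
          + Complex.I * (e (2 * n + 1) x * e (2 * m) x)
          + (-1 : ℂ) * (e (2 * n + 1) x * e (2 * m + 1) x) := by
    funext x
    simp only [p]
    ring_nf
    simp only [Complex.I_sq]
    ring
  rw [hpt, integral_comb]
  by_cases h : n = m
  · subst h
    rw [if_pos rfl, if_pos rfl, if_neg (show 2 * n ≠ 2 * n + 1 by omega),
      if_neg (show 2 * n + 1 ≠ 2 * n by omega)]
    ring
  · rw [if_neg (show 2 * n ≠ 2 * m by omega), if_neg (show 2 * n ≠ 2 * m + 1 by omega),
      if_neg (show 2 * n + 1 ≠ 2 * m by omega), if_neg (show 2 * n + 1 ≠ 2 * m + 1 by omega)]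
    ring

/-- Indicator elements of `L²`. -/
def EL (k : ℕ) : H := indicatorConstLp 2 (hs k) (volume_s_ne_top k) (2⁻¹ : ℂ)

/-- The basis of our subspace. -/
def φ (n : ℕ) : H := EL (2 * n) + Complex.I • EL (2 * n + 1)

lemma EL_coe (k : ℕ) : ⇑(EL k) =ᵐ[volume] (s k).indicator (fun _ => (2⁻¹ : ℂ)) :=
  indicatorConstLp_coeFn

lemma φ_coe (n : ℕ) : ⇑(φ n) =ᵐ[volume] p n := by
  filter_upwards [Lp.coeFn_add (EL (2 * n)) (Complex.I • EL (2 * n + 1)),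
    Lp.coeFn_smul Complex.I (EL (2 * n + 1)),
    EL_coe (2 * n), EL_coe (2 * n + 1)] with x h1 h2 h3 h4
  show (φ n) x = p n x
  rw [show φ n = EL (2 * n) + Complex.I • EL (2 * n + 1) from rfl]
  rw [h1, Pi.add_apply, h2, Pi.smul_apply, h3, h4, smul_eq_mul]
  rfl

/-- Conjugation as a continuous ℝ-linear map on `L²`. -/
def cjL : H →L[ℝ] H :=
  ContinuousLinearMap.compLpL 2 volume Complex.conjCLE.toContinuousLinearMap

lemma cjL_coe (f : H) : ⇑(cjL f) =ᵐ[volume] fun x => (starRingEnd ℂ) (f x) := by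
  have h : ⇑(cjL f) =ᵐ[volume] fun a => Complex.conjCLE.toContinuousLinearMap (f a) :=
    ContinuousLinearMap.coeFn_compLpL _ _
  filter_upwards [h] with x hx
  rw [hx]
  simp

lemma cjL_smul (a : ℂ) (f : H) : cjL (a • f) = (starRingEnd ℂ) a • cjL f := by
  apply Lp.ext
  filter_upwards [cjL_coe (a • f), Lp.coeFn_smul a f, cjL_coe f,
    Lp.coeFn_smul ((starRingEnd ℂ) a) (cjL f)] with x h1 h2 h3 h4
  rw [h1, h2, h4, Pi.smul_apply, Pi.smul_apply, h3, smul_eq_mul, smul_eq_mul, map_mul]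

lemma cjL_eq_zero {f : H} (h : cjL f = 0) : f = 0 := by
  apply Lp.ext
  have h0 : ⇑(cjL f) =ᵐ[volume] (0 : ℝ → ℂ) := by rw [h]; exact Lp.coeFn_zero ℂ 2 volume
  filter_upwards [cjL_coe f, h0, Lp.coeFn_zero ℂ 2 (volume : Measure ℝ)] with x h1 h2 h3
  rw [h3]
  have : (starRingEnd ℂ) (f x) = 0 := by rw [← h1, h2]; rfl
  simpa using congrArg (starRingEnd ℂ) this

/-- The conjugate basis. -/
def ψ (n : ℕ) : H := cjL (φ n)

lemma ψ_coe (n : ℕ) : ⇑(ψ n) =ᵐ[volume] fun x => (starRingEnd ℂ) (p n x) := by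
  filter_upwards [cjL_coe (φ n), (φ_coe n)] with x h1 h2
  rw [ψ, h1, h2]

lemma inner_φφ (n m : ℕ) : (inner ℂ (φ n) (φ m) : ℂ) = if n = m then 1 else 0 := by
  rw [L2.inner_def]
  rw [show (∫ a : ℝ, (inner ℂ (φ n a) (φ m a) : ℂ))
      = ∫ x : ℝ, (starRingEnd ℂ) (p n x) * p m x from
    integral_congr_ae (by
      filter_upwards [φ_coe n, φ_coe m] with x h1 h2
      rw [RCLike.inner_apply, h1, h2, mul_comm])]
  exact integral_conj_p_mul_p n m

lemma inner_φψ (n m : ℕ) : (inner ℂ (φ n) (ψ m) : ℂ) = 0 := by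
  rw [L2.inner_def]
  rw [show (∫ a : ℝ, (inner ℂ (φ n a) (ψ m a) : ℂ))
      = ∫ x : ℝ, (starRingEnd ℂ) (p n x * p m x) from
    integral_congr_ae (by
      filter_upwards [φ_coe n, ψ_coe m] with x h1 h2
      rw [RCLike.inner_apply, h1, h2, map_mul, mul_comm])]
  rw [integral_conj, integral_p_mul_p, map_zero]

lemma orthonormal_φ : Orthonormal ℂ φ :=
  orthonormal_iff_ite.2 inner_φφ

/-- Reflection as linear isometry on `L²`. -/
def RL : H →ₗᵢ[ℂ] H :=
  Lp.compMeasurePreservingₗᵢ ℂ Neg.neg (Measure.measurePreserving_neg volume)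

lemma RL_coe (f : H) : ⇑(RL f) =ᵐ[volume] fun x => f (-x) :=
  Lp.coeFn_compMeasurePreserving f (Measure.measurePreserving_neg volume)

/-- Even elements of `L²`. -/
def Ev : Submodule ℂ H := LinearMap.eqLocus RL.toLinearMap (LinearMap.id)

lemma isClosed_Ev : IsClosed (Ev : Set H) := by
  have : (Ev : Set H) = {x | RL x = x} := rfl
  rw [this]
  exact isClosed_eq RL.continuous continuous_id

lemma φ_mem_Ev (n : ℕ) : φ n ∈ Ev := by
  show RL (φ n) = φ n
  apply Lp.ext
  have hcomp : (fun x : ℝ => (φ n) (-x)) =ᵐ[volume] fun x => p n (-x) := by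
    have := (φ_coe n).comp_tendsto
      (Measure.measurePreserving_neg (volume : Measure ℝ)).quasiMeasurePreserving.tendsto_ae
    exact this
  filter_upwards [RL_coe (φ n), hcomp, φ_coe n] with x h1 h2 h3
  rw [h1, h2, p_neg, ← h3]

/-- The subspace: closure of the span of the `φ n`. -/
def L : Submodule ℂ H := (Submodule.span ℂ (Set.range φ)).topologicalClosure

/-- The conjugate subspace. -/
def L' : Submodule ℂ H := (Submodule.span ℂ (Set.range ψ)).topologicalClosure

lemma L_le_Ev : L ≤ Ev := by
  apply Submodule.topologicalClosure_minimal
  · rw [Submodule.span_le]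
    rintro _ ⟨n, rfl⟩
    exact φ_mem_Ev n
  · exact isClosed_Ev

lemma mem_L_even {f : H} (hf : f ∈ L) : (fun x => f (-x)) =ᵐ[volume] ⇑f := by
  have h : RL f = f := L_le_Ev hf
  have := RL_coe f
  rw [h] at this
  exact this.symm

lemma cjL_mem_L' {f : H} (hf : f ∈ L) : cjL f ∈ L' := by
  have hspan : ∀ v ∈ Submodule.span ℂ (Set.range φ),
      cjL v ∈ Submodule.span ℂ (Set.range ψ) := by
    intro v hv
    induction hv using Submodule.span_induction with
    | mem x hx =>
        obtain ⟨n, rfl⟩ := hx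
        exact Submodule.subset_span ⟨n, rfl⟩
    | zero => rw [map_zero]; exact Submodule.zero_mem _
    | add x y _ _ hx hy => rw [map_add]; exact Submodule.add_mem _ hx hy
    | smul a x _ hx => rw [cjL_smul]; exact Submodule.smul_mem _ _ hx
  have hf' : f ∈ closure ((Submodule.span ℂ (Set.range φ)) : Set H) := hf
  have h1 : cjL f ∈ cjL '' closure ((Submodule.span ℂ (Set.range φ)) : Set H) :=
    Set.mem_image_of_mem _ hf'
  have h2 := image_closure_subset_closure_image (f := ⇑cjL)
    (s := ((Submodule.span ℂ (Set.range φ)) : Set H)) cjL.continuous h1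
  refine closure_mono ?_ h2
  rintro _ ⟨v, hv, rfl⟩
  exact hspan v hv

lemma ortho_L_L' {u v : H} (hu : u ∈ L) (hv : v ∈ L') : (inner ℂ u v : ℂ) = 0 := by
  have hAB : Submodule.span ℂ (Set.range φ) ⟂ Submodule.span ℂ (Set.range ψ) := by
    rw [Submodule.isOrtho_span]
    rintro _ ⟨n, rfl⟩ _ ⟨m, rfl⟩
    exact inner_φψ n m
  have h1 : L ⟂ Submodule.span ℂ (Set.range ψ) :=
    Submodule.isOrtho_iff_le.2 (Submodule.topologicalClosure_minimal _
      (Submodule.isOrtho_iff_le.1 hAB) (Submodule.isClosed_orthogonal _))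
  have h2 : L' ⟂ L :=
    Submodule.isOrtho_iff_le.2 (Submodule.topologicalClosure_minimal _
      (Submodule.isOrtho_iff_le.1 h1.symm) (Submodule.isClosed_orthogonal _))
  exact h2.symm.inner_eq hu hv

lemma not_finiteDimensional_L : ¬ FiniteDimensional ℂ L := by
  intro hFD
  have hmem : ∀ n, φ n ∈ L := fun n =>
    Submodule.le_topologicalClosure _ (Submodule.subset_span ⟨n, rfl⟩)
  set v : ℕ → L := fun n => ⟨φ n, hmem n⟩ with hv
  have hli : LinearIndependent ℂ v := by
    apply LinearIndependent.of_comp L.subtype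
    have : (⇑L.subtype ∘ v) = φ := rfl
    rw [this]
    exact orthonormal_φ.linearIndependent
  haveI : Finite ℕ := hli.finite
  exact not_finite ℕ

/-- Fourier transform behaviour: for an a.e.-even `f`, the transform of the conjugate is
the conjugate of the transform. -/
lemma ft_conj (f g : H) (hev : (fun x => f (-x)) =ᵐ[volume] ⇑f)
    (hg : ⇑g =ᵐ[volume] fun x => (starRingEnd ℂ) (f x)) (y : ℝ) :
    ft (⇑g) y = (starRingEnd ℂ) (ft (⇑f) y) := by
  have step1 : ft (⇑g) y = ∫ x : ℝ, Complex.exp (-(Complex.I * y * x)) * (starRingEnd ℂ) (f x) := by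
    rw [ft]
    apply integral_congr_ae
    filter_upwards [hg] with x hx
    rw [hx]
  have step2 : (∫ x : ℝ, Complex.exp (-(Complex.I * y * x)) * (starRingEnd ℂ) (f x))
      = ∫ x : ℝ, (starRingEnd ℂ) (Complex.exp (Complex.I * y * x) * f x) := by
    apply integral_congr_ae
    filter_upwards with x
    rw [map_mul, ← Complex.exp_conj]
    congr 2
    simp only [map_mul, Complex.conj_I, Complex.conj_ofReal]
    ring
  have step3 : (∫ x : ℝ, (starRingEnd ℂ) (Complex.exp (Complex.I * y * x) * f x))
      = (starRingEnd ℂ) (∫ x : ℝ, Complex.exp (Complex.I * y * x) * f x) := integral_conj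
  have step4 : (∫ x : ℝ, Complex.exp (Complex.I * y * x) * f x) = ft (⇑f) y := by
    have hneg : (∫ x : ℝ, Complex.exp (Complex.I * y * x) * f x)
        = ∫ x : ℝ, Complex.exp (Complex.I * y * ((-x : ℝ) : ℂ)) * f (-x) :=
      ((Measure.measurePreserving_neg (volume : Measure ℝ)).integral_comp
        (MeasurableEquiv.neg ℝ).measurableEmbedding
        (fun x : ℝ => Complex.exp (Complex.I * y * x) * f x)).symm
    rw [hneg, ft]
    apply integral_congr_ae
    filter_upwards [hev] with x hx
    rw [hx]
    congr 1
    push_cast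
    ring_nf
  rw [step1, step2, step3, step4]

end

end Stmt11Aux

theorem stmt11 :
    ∃ L : Submodule ℂ (Lp ℂ 2 (volume : Measure ℝ)),
      IsClosed (L : Set (Lp ℂ 2 (volume : Measure ℝ))) ∧
      (¬ FiniteDimensional ℂ L) ∧
      ∀ f ∈ L, f ≠ 0 →
        ∃ g : Lp ℂ 2 (volume : Measure ℝ),
          (∀ᵐ x : ℝ, ‖f x‖ = ‖g x‖) ∧
          (∀ᵐ y : ℝ, ‖ft (⇑f) y‖ = ‖ft (⇑g) y‖) ∧
          LinearIndependent ℂ ![f, g] := by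
  open Stmt11Aux in
  refine ⟨Stmt11Aux.L, Submodule.isClosed_topologicalClosure _, not_finiteDimensional_L, ?_⟩
  intro f hf hf0
  refine ⟨cjL f, ?_, ?_, ?_⟩
  · filter_upwards [cjL_coe f] with x hx
    rw [hx]
    exact (RCLike.norm_conj _).symm
  · have h := ft_conj f (cjL f) (mem_L_even hf) (cjL_coe f)
    filter_upwards with y
    rw [h y, RCLike.norm_conj]
  · rw [LinearIndependent.pair_iff]
    intro a b hab
    by_cases hb : b = 0
    · subst hb
      rw [zero_smul, add_zero] at hab
      rcases smul_eq_zero.1 hab with ha | hfz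
      · exact ⟨ha, rfl⟩
      · exact absurd hfz hf0
    · exfalso
      have hgL : cjL f ∈ Stmt11Aux.L := by
        have : cjL f = (-(b⁻¹ * a)) • f := by
          have : b • (cjL f) = -(a • f) := by
            rw [eq_neg_iff_add_eq_zero, add_comm]; exact hab
          calc cjL f = b⁻¹ • (b • cjL f) := by rw [smul_smul, inv_mul_cancel₀ hb, one_smul]
            _ = b⁻¹ • (-(a • f)) := by rw [this]
            _ = (-(b⁻¹ * a)) • f := by rw [smul_neg, smul_smul, neg_smul]
        rw [this]
        exact Submodule.smul_mem _ _ hf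
      have hgL' : cjL f ∈ L' := cjL_mem_L' hf
      have : (inner ℂ (cjL f) (cjL f) : ℂ) = 0 := ortho_L_L' hgL hgL'
      have hcz : cjL f = 0 := inner_self_eq_zero.1 this
      exact hf0 (cjL_eq_zero hcz)
end

section
/- Let r, φ, ψ, θ ∈ ℝ with r·sin φ·sin ψ·sin(ψ−φ) ≠ 0, and set p = (r²−1)sin ψ/(r sin(ψ−φ)), q = (r²−1)sin φ/sin(ψ−φ). Define b = (1, p·e^{i(θ+φ)}, q·e^{i(2θ+ψ)}, r·e^{3iθ}) and c = (1, p·e^{i(θ−φ)}, q·e^{i(2θ−ψ)}, r·e^{3iθ}) in ℂ⁴. Then |b_j| = |c_j| for j = 1,2,3,4, and Σ_{j=1}^{4−k} b_{k+j}·conj(b_j) = Σ_{j=1}^{4−k} c_{k+j}·conj(c_j) for k = 1, 2, 3. -/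
open Real Complex

theorem stmt18 (r φ ψ θ : ℝ)
    (hne : r * Real.sin φ * Real.sin ψ * Real.sin (ψ - φ) ≠ 0)
    (p q : ℝ)
    (hp : p = (r ^ 2 - 1) * Real.sin ψ / (r * Real.sin (ψ - φ)))
    (hq : q = (r ^ 2 - 1) * Real.sin φ / Real.sin (ψ - φ))
    (b₁ b₂ b₃ b₄ c₁ c₂ c₃ c₄ : ℂ)
    (hb₁ : b₁ = 1) (hb₂ : b₂ = (p : ℂ) * Complex.exp (Complex.I * (θ + φ)))
    (hb₃ : b₃ = (q : ℂ) * Complex.exp (Complex.I * (2 * θ + ψ)))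
    (hb₄ : b₄ = (r : ℂ) * Complex.exp (3 * Complex.I * θ))
    (hc₁ : c₁ = 1) (hc₂ : c₂ = (p : ℂ) * Complex.exp (Complex.I * (θ - φ)))
    (hc₃ : c₃ = (q : ℂ) * Complex.exp (Complex.I * (2 * θ - ψ)))
    (hc₄ : c₄ = (r : ℂ) * Complex.exp (3 * Complex.I * θ)) :
    (‖b₁‖ = ‖c₁‖ ∧ ‖b₂‖ = ‖c₂‖ ∧ ‖b₃‖ = ‖c₃‖ ∧ ‖b₄‖ = ‖c₄‖) ∧
    (b₂ * (starRingEnd ℂ) b₁ + b₃ * (starRingEnd ℂ) b₂ + b₄ * (starRingEnd ℂ) b₃ =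
      c₂ * (starRingEnd ℂ) c₁ + c₃ * (starRingEnd ℂ) c₂ + c₄ * (starRingEnd ℂ) c₃) ∧
    (b₃ * (starRingEnd ℂ) b₁ + b₄ * (starRingEnd ℂ) b₂ =
      c₃ * (starRingEnd ℂ) c₁ + c₄ * (starRingEnd ℂ) c₂) ∧
    (b₄ * (starRingEnd ℂ) b₁ = c₄ * (starRingEnd ℂ) c₁) := by
  have hr : r ≠ 0 := fun h => hne (by simp [h])
  have hsφ : Real.sin φ ≠ 0 := fun h => hne (by simp [h])
  have hsψ : Real.sin ψ ≠ 0 := fun h => hne (by simp [h])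
  have hsd : Real.sin (ψ - φ) ≠ 0 := fun h => hne (by simp [h])
  have L1 : q * Real.sin ψ = r * p * Real.sin φ := by
    rw [hp, hq]; field_simp
  have L2 : p * Real.sin φ + p * q * Real.sin (ψ - φ) = r * q * Real.sin ψ := by
    rw [hp, hq]; field_simp; ring
  have L1c : (q : ℂ) * Complex.sin ψ = (r : ℂ) * p * Complex.sin φ := by
    exact_mod_cast congrArg Complex.ofReal L1
  have L2c : (p : ℂ) * Complex.sin φ + p * q * Complex.sin ((ψ : ℂ) - φ) =
      (r : ℂ) * q * Complex.sin ψ := by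
    exact_mod_cast congrArg Complex.ofReal L2
  have hsub : ∀ x : ℂ, Complex.exp (Complex.I * x) - Complex.exp (-(Complex.I * x)) =
      2 * Complex.I * Complex.sin x := by
    intro x
    rw [Complex.sin, show -x * Complex.I = -(Complex.I * x) by ring,
      show x * Complex.I = Complex.I * x by ring]
    linear_combination (Complex.exp (Complex.I * x) - Complex.exp (-(Complex.I * x))) *
      Complex.I_mul_I
  have hu : ∀ x : ℂ, Complex.exp (Complex.I * x) * Complex.exp (-(Complex.I * x)) = 1 := by
    intro x; rw [← Complex.exp_add]; simp
  have hconj : ∀ x : ℂ, (starRingEnd ℂ) (Complex.exp (Complex.I * x)) =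
      Complex.exp (-(Complex.I * (starRingEnd ℂ) x)) := by
    intro x; rw [← Complex.exp_conj]; simp
  set A := Complex.exp (Complex.I * (θ : ℂ)) with hA
  set A' := Complex.exp (-(Complex.I * (θ : ℂ))) with hA'
  set F := Complex.exp (Complex.I * (φ : ℂ)) with hF
  set F' := Complex.exp (-(Complex.I * (φ : ℂ))) with hF'
  set S := Complex.exp (Complex.I * (ψ : ℂ)) with hS
  set S' := Complex.exp (-(Complex.I * (ψ : ℂ))) with hS'
  have split : ∀ x y : ℂ, Complex.exp (Complex.I * (x + y)) =
      Complex.exp (Complex.I * x) * Complex.exp (Complex.I * y) := by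
    intro x y; rw [← Complex.exp_add]; congr 1; ring
  have splitn : ∀ x y : ℂ, Complex.exp (-(Complex.I * (x + y))) =
      Complex.exp (-(Complex.I * x)) * Complex.exp (-(Complex.I * y)) := by
    intro x y; rw [← Complex.exp_add]; congr 1; ring
  have e2 : Complex.exp (Complex.I * ((θ : ℂ) + φ)) = A * F := split θ φ
  have e2' : Complex.exp (-(Complex.I * ((θ : ℂ) + φ))) = A' * F' := splitn θ φ
  have e2m : Complex.exp (Complex.I * ((θ : ℂ) - φ)) = A * F' := by
    rw [show ((θ : ℂ) - φ) = (θ : ℂ) + (-(φ : ℂ)) by ring, split]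
    congr 1; rw [hF']; congr 1; ring
  have e2m' : Complex.exp (-(Complex.I * ((θ : ℂ) - φ))) = A' * F := by
    rw [show -(Complex.I * ((θ : ℂ) - φ)) = -(Complex.I * θ) + Complex.I * φ by ring,
      Complex.exp_add]
  have e3 : Complex.exp (Complex.I * (2 * (θ : ℂ) + ψ)) = A * A * S := by
    rw [show (2 * (θ : ℂ) + ψ) = (θ : ℂ) + ((θ : ℂ) + ψ) by ring, split, split]; ring
  have e3' : Complex.exp (-(Complex.I * (2 * (θ : ℂ) + ψ))) = A' * A' * S' := by
    rw [show -(Complex.I * (2 * (θ : ℂ) + ψ)) =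
      -(Complex.I * θ) + (-(Complex.I * θ) + -(Complex.I * ψ)) by ring,
      Complex.exp_add, Complex.exp_add]; ring
  have e3m : Complex.exp (Complex.I * (2 * (θ : ℂ) - ψ)) = A * A * S' := by
    rw [show Complex.I * (2 * (θ : ℂ) - ψ) =
      Complex.I * θ + (Complex.I * θ + -(Complex.I * ψ)) by ring,
      Complex.exp_add, Complex.exp_add]; ring
  have e3m' : Complex.exp (-(Complex.I * (2 * (θ : ℂ) - ψ))) = A' * A' * S := by
    rw [show -(Complex.I * (2 * (θ : ℂ) - ψ)) =
      -(Complex.I * θ) + (-(Complex.I * θ) + Complex.I * ψ) by ring,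
      Complex.exp_add, Complex.exp_add]; ring
  have e4 : Complex.exp (3 * Complex.I * (θ : ℂ)) = A * A * A := by
    rw [show 3 * Complex.I * (θ : ℂ) =
      Complex.I * θ + (Complex.I * θ + Complex.I * θ) by ring,
      Complex.exp_add, Complex.exp_add]; ring
  have hD : S * F' - S' * F = 2 * Complex.I * Complex.sin ((ψ : ℂ) - φ) := by
    have h := hsub ((ψ : ℂ) - φ)
    rw [show -(Complex.I * ((ψ : ℂ) - φ)) = -(Complex.I * ψ) + Complex.I * φ by ring] at h
    rw [show Complex.I * ((ψ : ℂ) - φ) = Complex.I * ψ + -(Complex.I * φ) by ring] at h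
    rw [Complex.exp_add, Complex.exp_add] at h
    linear_combination h
  have huθ : A * A' = 1 := hu θ
  have hFφ : F - F' = 2 * Complex.I * Complex.sin (φ : ℂ) := hsub φ
  have hSψ : S - S' = 2 * Complex.I * Complex.sin (ψ : ℂ) := hsub ψ
  subst hb₁ hb₂ hb₃ hb₄ hc₁ hc₂ hc₃ hc₄
  refine ⟨⟨by simp, ?_, ?_, rfl⟩, ?_, ?_, rfl⟩
  · simp [Complex.norm_exp]
  · simp [Complex.norm_exp]
  · -- k = 1
    simp only [map_mul, map_one, mul_one, Complex.conj_ofReal, hconj, map_add, map_sub,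
      map_ofNat]
    rw [e2, e2', e2m, e2m', e3, e3', e3m, e3m', e4]
    linear_combination A * (p : ℂ) * hFφ + A * (p : ℂ) * q * (A * A') * hD -
      A * (r : ℂ) * q * (A * A') ^ 2 * hSψ + 2 * Complex.I * A * L2c +
      (2 * Complex.I * A * p * q * Complex.sin ((ψ : ℂ) - φ) -
        2 * Complex.I * A * r * q * Complex.sin (ψ : ℂ) * (A * A' + 1)) * huθ
  · -- k = 2
    simp only [map_mul, map_one, mul_one, Complex.conj_ofReal, hconj, map_add, map_sub,
      map_ofNat]
    rw [e2', e2m', e3, e3m, e4]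
    linear_combination A ^ 2 * (q : ℂ) * hSψ - A ^ 2 * (r : ℂ) * p * (A * A') * hFφ +
      2 * Complex.I * A ^ 2 * L1c - 2 * Complex.I * A ^ 2 * (r : ℂ) * p *
      Complex.sin (φ : ℂ) * huθ
end
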